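/- arXiv:1410.5161 — 3 statements merged into one kernel-verified Lean document; each statement's English description precedes it below -/
import Mathlib

section
/- If (A, m, η, Δ, ε) is a bialgebra over a field k and α : A → A is a bialgebra isomorphism, then (A, α, α∘m, η, Δ∘α⁻¹, ε) is a monoidal Hom-bialgebra, i.e. (A, α∘m, η) satisfies the Hom-associativity law α(a)·(b·c) = (a·b)·α(c) and Hom-unitality 1·a = a·1 = α(a), (A, Δ∘α⁻¹, ε) satisfies the dual Hom-coassociativity and Hom-counitality, and Δ∘α⁻¹ and ε are multiplicative for the twisted product. -/
open TensorProduct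

noncomputable section
namespace HomTwist

variable {k : Type*} [CommRing k]

section Defs
variable {H₁ H₂ A B : Type*} [AddCommGroup H₁] [Module k H₁] [AddCommGroup H₂] [Module k H₂]
  [AddCommGroup A] [Module k A] [AddCommGroup B] [Module k B]

/-- The componentwise "action" of `H₁ ⊗ H₂` on `A ⊗ B` induced by bilinear actions
`f : H₁ → A → A` and `g : H₂ → B → B`:  `(h₁ ⊗ h₂) • (a ⊗ b) = (f h₁ a) ⊗ (g h₂ b)`. -/
def pairMap (f : H₁ →ₗ[k] A →ₗ[k] A) (g : H₂ →ₗ[k] B →ₗ[k] B) :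
    (H₁ ⊗[k] H₂) →ₗ[k] (A ⊗[k] B) →ₗ[k] A ⊗[k] B :=
  TensorProduct.lift (((TensorProduct.mapBilinear (RingHom.id k) A B A B).comp f).compl₂ g)

end Defs

section Structures
variable {H : Type*} [AddCommGroup H] [Module k H]

/-- Componentwise product on `H ⊗ H` induced by a bilinear multiplication on `H`. -/
def mulT (mul : H →ₗ[k] H →ₗ[k] H) : (H ⊗[k] H) →ₗ[k] (H ⊗[k] H) →ₗ[k] H ⊗[k] H :=
  pairMap mul mul

/-- Componentwise product on `H ⊗ (H ⊗ H)`. -/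
def mulT3 (mul : H →ₗ[k] H →ₗ[k] H) :
    (H ⊗[k] (H ⊗[k] H)) →ₗ[k] (H ⊗[k] (H ⊗[k] H)) →ₗ[k] H ⊗[k] (H ⊗[k] H) :=
  pairMap mul (mulT mul)

/-- `(r ⊗ R) ↦ r⁽¹⁾ ⊗ (R⁽¹⁾ ⊗ r⁽²⁾R⁽²⁾)`. -/
def hexA (mul : H →ₗ[k] H →ₗ[k] H) :
    ((H ⊗[k] H) ⊗[k] (H ⊗[k] H)) →ₗ[k] H ⊗[k] (H ⊗[k] H) :=
  (TensorProduct.assoc k H H H).toLinearMap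
    ∘ₗ TensorProduct.map LinearMap.id (TensorProduct.lift mul)
    ∘ₗ (TensorProduct.tensorTensorTensorComm k H H H H).toLinearMap

/-- `(r ⊗ R) ↦ r⁽¹⁾R⁽¹⁾ ⊗ (R⁽²⁾ ⊗ r⁽²⁾)`. -/
def hexB (mul : H →ₗ[k] H →ₗ[k] H) :
    ((H ⊗[k] H) ⊗[k] (H ⊗[k] H)) →ₗ[k] H ⊗[k] (H ⊗[k] H) :=
  TensorProduct.map (TensorProduct.lift mul) (TensorProduct.comm k H H).toLinearMap
    ∘ₗ (TensorProduct.tensorTensorTensorComm k H H H H).toLinearMap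

/-- Axioms of a monoidal Hom-bialgebra (Caenepeel–Goyvaerts). -/
structure IsMonHomBialgebra (mul : H →ₗ[k] H →ₗ[k] H) (one : H) (alpha : H ≃ₗ[k] H)
    (comul : H →ₗ[k] H ⊗[k] H) (counit : H →ₗ[k] k) : Prop where
  alpha_mul : ∀ a b, alpha (mul a b) = mul (alpha a) (alpha b)
  hom_assoc : ∀ a b c, mul (alpha a) (mul b c) = mul (mul a b) (alpha c)
  alpha_one : alpha one = one
  one_mul' : ∀ a, mul one a = alpha a
  mul_one' : ∀ a, mul a one = alpha a
  comul_alpha : ∀ c, comul (alpha c)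
      = TensorProduct.map alpha.toLinearMap alpha.toLinearMap (comul c)
  hom_coassoc : ∀ c,
      TensorProduct.map alpha.symm.toLinearMap comul (comul c)
        = TensorProduct.assoc k H H H
            (TensorProduct.map comul alpha.symm.toLinearMap (comul c))
  counit_alpha : ∀ c, counit (alpha c) = counit c
  counit_id : ∀ c, TensorProduct.lid k H
      (TensorProduct.map counit LinearMap.id (comul c)) = alpha.symm c
  id_counit : ∀ c, TensorProduct.rid k H
      (TensorProduct.map LinearMap.id counit (comul c)) = alpha.symm c
  comul_mul : ∀ a b, comul (mul a b) = mulT mul (comul a) (comul b)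
  comul_one : comul one = one ⊗ₜ[k] one
  counit_mul : ∀ a b, counit (mul a b) = counit a * counit b
  counit_one : counit one = 1

/-- Axioms of a (Makhlouf–Silvestrov) Hom-bialgebra (with bijective structure map). -/
structure IsHomBialgebra (mul : H →ₗ[k] H →ₗ[k] H) (one : H) (alpha : H ≃ₗ[k] H)
    (comul : H →ₗ[k] H ⊗[k] H) (counit : H →ₗ[k] k) : Prop where
  alpha_mul : ∀ a b, alpha (mul a b) = mul (alpha a) (alpha b)
  hom_assoc : ∀ a b c, mul (alpha a) (mul b c) = mul (mul a b) (alpha c)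
  alpha_one : alpha one = one
  one_mul' : ∀ a, mul one a = alpha a
  mul_one' : ∀ a, mul a one = alpha a
  comul_alpha : ∀ c, comul (alpha c)
      = TensorProduct.map alpha.toLinearMap alpha.toLinearMap (comul c)
  hom_coassoc : ∀ c,
      TensorProduct.map alpha.toLinearMap comul (comul c)
        = TensorProduct.assoc k H H H
            (TensorProduct.map comul alpha.toLinearMap (comul c))
  counit_alpha : ∀ c, counit (alpha c) = counit c
  counit_id : ∀ c, TensorProduct.lid k H
      (TensorProduct.map counit LinearMap.id (comul c)) = alpha c
  id_counit : ∀ c, TensorProduct.rid k H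
      (TensorProduct.map LinearMap.id counit (comul c)) = alpha c
  comul_mul : ∀ a b, comul (mul a b) = mulT mul (comul a) (comul b)
  comul_one : comul one = one ⊗ₜ[k] one
  counit_mul : ∀ a b, counit (mul a b) = counit a * counit b
  counit_one : counit one = 1

/-- Axioms of an ordinary (possibly noncommutative) bialgebra, given by raw data. -/
structure IsBialgebra (mul : H →ₗ[k] H →ₗ[k] H) (one : H)
    (comul : H →ₗ[k] H ⊗[k] H) (counit : H →ₗ[k] k) : Prop where
  assoc : ∀ a b c, mul (mul a b) c = mul a (mul b c)
  one_mul' : ∀ a, mul one a = a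
  mul_one' : ∀ a, mul a one = a
  coassoc : ∀ c, TensorProduct.map LinearMap.id comul (comul c)
      = TensorProduct.assoc k H H H (TensorProduct.map comul LinearMap.id (comul c))
  counit_id : ∀ c, TensorProduct.lid k H
      (TensorProduct.map counit LinearMap.id (comul c)) = c
  id_counit : ∀ c, TensorProduct.rid k H
      (TensorProduct.map LinearMap.id counit (comul c)) = c
  comul_mul : ∀ a b, comul (mul a b) = mulT mul (comul a) (comul b)
  comul_one : comul one = one ⊗ₜ[k] one
  counit_mul : ∀ a b, counit (mul a b) = counit a * counit b
  counit_one : counit one = 1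

/-- A Drinfeld twist `σ` (with inverse `ϱ`) for a monoidal Hom-bialgebra. -/
structure IsTwist (mul : H →ₗ[k] H →ₗ[k] H) (one : H) (alpha : H ≃ₗ[k] H)
    (comul : H →ₗ[k] H ⊗[k] H) (counit : H →ₗ[k] k) (σ ϱ : H ⊗[k] H) : Prop where
  mul_inv : mulT mul σ ϱ = one ⊗ₜ[k] one
  inv_mul : mulT mul ϱ σ = one ⊗ₜ[k] one
  T1 : TensorProduct.map alpha.toLinearMap alpha.toLinearMap σ = σ
  T2l : TensorProduct.lid k H (TensorProduct.map counit LinearMap.id σ) = one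
  T2r : TensorProduct.rid k H (TensorProduct.map LinearMap.id counit σ) = one
  T3 : TensorProduct.map LinearMap.id (mulT mul σ)
        (TensorProduct.map LinearMap.id comul σ)
      = TensorProduct.assoc k H H H
          (TensorProduct.map (mulT mul σ) LinearMap.id
            (TensorProduct.map comul LinearMap.id σ))

/-- The `R`-matrix axioms (Q1)–(Q4) for a monoidal Hom-bialgebra. -/
structure IsRMatrix (mul : H →ₗ[k] H →ₗ[k] H) (alpha : H ≃ₗ[k] H)
    (comul : H →ₗ[k] H ⊗[k] H) (R : H ⊗[k] H) : Prop where
  Q1 : TensorProduct.map alpha.toLinearMap alpha.toLinearMap R = R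
  Q2 : ∀ h, mulT mul R (comul h)
      = mulT mul (TensorProduct.comm k H H (comul h)) R
  Q3 : TensorProduct.assoc k H H H (TensorProduct.map comul LinearMap.id R)
      = hexA mul (R ⊗ₜ[k] R)
  Q4 : TensorProduct.map LinearMap.id comul R = hexB mul (R ⊗ₜ[k] R)

/-- Axioms of a monoidal Hom-algebra. -/
structure IsMonHomAlgebra {A : Type*} [AddCommGroup A] [Module k A]
    (mul : A →ₗ[k] A →ₗ[k] A) (one : A) (alpha : A ≃ₗ[k] A) : Prop where
  alpha_mul : ∀ a b, alpha (mul a b) = mul (alpha a) (alpha b)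
  hom_assoc : ∀ a b c, mul (alpha a) (mul b c) = mul (mul a b) (alpha c)
  alpha_one : alpha one = one
  one_mul' : ∀ a, mul one a = alpha a
  mul_one' : ∀ a, mul a one = alpha a

/-- Axioms of a monoidal Hom-coalgebra. -/
structure IsMonHomCoalgebra {C : Type*} [AddCommGroup C] [Module k C]
    (comul : C →ₗ[k] C ⊗[k] C) (counit : C →ₗ[k] k) (alpha : C ≃ₗ[k] C) : Prop where
  comul_alpha : ∀ c, comul (alpha c)
      = TensorProduct.map alpha.toLinearMap alpha.toLinearMap (comul c)
  hom_coassoc : ∀ c,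
      TensorProduct.map alpha.symm.toLinearMap comul (comul c)
        = TensorProduct.assoc k C C C
            (TensorProduct.map comul alpha.symm.toLinearMap (comul c))
  counit_alpha : ∀ c, counit (alpha c) = counit c
  counit_id : ∀ c, TensorProduct.lid k C
      (TensorProduct.map counit LinearMap.id (comul c)) = alpha.symm c
  id_counit : ∀ c, TensorProduct.rid k C
      (TensorProduct.map LinearMap.id counit (comul c)) = alpha.symm c

/-- Axioms of a left `H`-Hom-module. -/
structure IsHomModule {M : Type*} [AddCommGroup M] [Module k M]
    (mul : H →ₗ[k] H →ₗ[k] H) (one : H) (alpha : H ≃ₗ[k] H)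
    (alM : M ≃ₗ[k] M) (act : H →ₗ[k] M →ₗ[k] M) : Prop where
  compat : ∀ h m, alM (act h m) = act (alpha h) (alM m)
  hom_smul : ∀ h h' m, act (alpha h) (act h' m) = act (mul h h') (alM m)
  one_smul' : ∀ m, act one m = alM m

/-- The twisted coproduct `Δᵠ(x) = (σ Δ(x)) ϱ`. -/
def twistComul (mul : H →ₗ[k] H →ₗ[k] H) (comul : H →ₗ[k] H ⊗[k] H)
    (σ ϱ : H ⊗[k] H) : H →ₗ[k] H ⊗[k] H :=
  ((mulT mul).flip ϱ) ∘ₗ (mulT mul σ) ∘ₗ comul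

end Structures
end HomTwist
end


/-!
Twisting by `α` changes each structure map by a single factor `α` or `α⁻¹`, and since `α`
commutes with the multiplication, the unit, `Δ` and `ε`, these factors can be moved to the
outside of every axiom. What remains is an axiom of the bialgebra `A` with one global power of
`α` applied to both sides: e.g. `α(a)·(b·c) = α(α(a)α(bc)) = α(α(abc)) = (a·b)·α(c)`.
-/

namespace HomTwist
open TensorProduct

section General
variable {k : Type*} [CommRing k]

lemma pairMap_tmul {H₁ H₂ A B : Type*}
    [AddCommGroup H₁] [Module k H₁] [AddCommGroup H₂] [Module k H₂]
    [AddCommGroup A] [Module k A] [AddCommGroup B] [Module k B]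
    (f : H₁ →ₗ[k] A →ₗ[k] A) (g : H₂ →ₗ[k] B →ₗ[k] B) (h₁ : H₁) (h₂ : H₂) (a : A) (b : B) :
    pairMap f g (h₁ ⊗ₜ[k] h₂) (a ⊗ₜ[k] b) = f h₁ a ⊗ₜ[k] g h₂ b := by
  simp [pairMap]

lemma mulT_mul_compr₂ {A : Type*} [Ring A] [Algebra k A] (f : A →ₗ[k] A) (s t : A ⊗[k] A) :
    mulT ((LinearMap.mul k A).compr₂ f) s t = map f f (s * t) := by
  induction s using TensorProduct.induction_on with
  | zero => simp
  | add x y hx hy => simp [add_mul, hx, hy]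
  | tmul a b =>
    induction t using TensorProduct.induction_on with
    | zero => simp
    | add x y hx hy => simp [mul_add, hx, hy]
    | tmul c d => simp [mulT, pairMap_tmul]

theorem isMonHomAlgebra_mul_compr₂ {A : Type*} [Ring A] [Algebra k A] (α : A ≃ₐ[k] A) :
    IsMonHomAlgebra ((LinearMap.mul k A).compr₂ α.toLinearMap) 1 α.toLinearEquiv where
  alpha_mul a b := by simp
  hom_assoc a b c := by simp [← map_mul, mul_assoc]
  alpha_one := by simp
  one_mul' a := by simp
  mul_one' a := by simp

section Coalgebra
variable {C : Type*} [AddCommGroup C] [Module k C] [Coalgebra k C]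

lemma comul_symm_apply_of_comul_apply {α : C ≃ₗ[k] C}
    (hcomul : ∀ c, Coalgebra.comul (R := k) (α c) = map α.toLinearMap α.toLinearMap
      (Coalgebra.comul c)) (c : C) :
    Coalgebra.comul (R := k) (α.symm c)
      = map α.symm.toLinearMap α.symm.toLinearMap (Coalgebra.comul c) := by
  conv_rhs => rw [← α.apply_symm_apply c, hcomul, map_map]
  simp

lemma hom_coassoc_comul_comp {β : C →ₗ[k] C}
    (hβ : ∀ c, Coalgebra.comul (R := k) (β c) = map β β (Coalgebra.comul c)) (c : C) :
    map β (Coalgebra.comul ∘ₗ β) (Coalgebra.comul c)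
      = TensorProduct.assoc k C C C (map (Coalgebra.comul ∘ₗ β) β (Coalgebra.comul c)) := by
  have hcomp : Coalgebra.comul ∘ₗ β = map β β ∘ₗ Coalgebra.comul (R := k) :=
    LinearMap.ext hβ
  have hleft : map β (Coalgebra.comul ∘ₗ β)
      = map β (map β β) ∘ₗ (Coalgebra.comul (R := k) (A := C)).lTensor C := by
    rw [hcomp]; ext; simp
  have hright : map (Coalgebra.comul ∘ₗ β) β
      = map (map β β) β ∘ₗ (Coalgebra.comul (R := k) (A := C)).rTensor C := by
    rw [hcomp]; ext; simp
  rw [hleft, hright, LinearMap.comp_apply, LinearMap.comp_apply, ← Coalgebra.coassoc_apply,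
    map_map_assoc]

theorem isMonHomCoalgebra_comul_comp_symm (α : C ≃ₗ[k] C)
    (hcomul : ∀ c, Coalgebra.comul (R := k) (α c) = map α.toLinearMap α.toLinearMap
      (Coalgebra.comul c))
    (hcounit : ∀ c, Coalgebra.counit (R := k) (α c) = Coalgebra.counit c) :
    IsMonHomCoalgebra (Coalgebra.comul ∘ₗ α.symm.toLinearMap) Coalgebra.counit α where
  comul_alpha c := by simp [← hcomul]
  hom_coassoc c := hom_coassoc_comul_comp (comul_symm_apply_of_comul_apply hcomul) (α.symm c)
  counit_alpha := hcounit
  counit_id c := by simp [← LinearMap.rTensor_def]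
  id_counit c := by simp [← LinearMap.lTensor_def]

end Coalgebra
end General

/-- A bialgebra `A` over a field `k` together with a bialgebra
isomorphism `α` yields the monoidal Hom-bialgebra `ᵅA = (A, α, α∘m, η, Δ∘α⁻¹, ε)`. -/
theorem bialgebra_iso_gives_monoidal_hom_bialgebra
    {k A : Type*} [Field k] [Ring A] [Bialgebra k A]
    (α : A ≃ₐ[k] A)
    (hcomul : ∀ a : A, Coalgebra.comul (R := k) (α a)
      = TensorProduct.map α.toLinearMap α.toLinearMap (Coalgebra.comul (R := k) a))
    (hcounit : ∀ a : A, Coalgebra.counit (R := k) (α a) = Coalgebra.counit (R := k) a) :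
    IsMonHomBialgebra ((LinearMap.mul k A).compr₂ α.toLinearMap) 1 α.toLinearEquiv
      ((Coalgebra.comul (R := k) (A := A)) ∘ₗ (α.symm : A ≃ₐ[k] A).toLinearMap)
      (Coalgebra.counit (R := k) (A := A)) := by
  have hA := isMonHomAlgebra_mul_compr₂ α
  have hC := isMonHomCoalgebra_comul_comp_symm α.toLinearEquiv hcomul hcounit
  exact { hA, hC with
    comul_mul := fun a b => by
      rw [mulT_mul_compr₂]
      simp only [LinearMap.comp_apply, LinearMap.compr₂_apply, LinearMap.mul_apply',
        AlgEquiv.toLinearMap_apply, α.symm_apply_apply, ← Bialgebra.comul_mul, ← map_mul,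
        ← hcomul, α.apply_symm_apply]
    comul_one := by simp [Algebra.TensorProduct.one_def]
    counit_mul := fun a b => by simp [hcounit]
    counit_one := by simp }

end HomTwist
end

section
/- Let (A, R) be a quasitriangular bialgebra over k and α : A → A an invertible bialgebra homomorphism with (α⊗α)(R) = R. Then R is an R-matrix for the monoidal Hom-bialgebra ᵅA = (A, α, α∘m, η, Δ∘α⁻¹, ε), i.e. ᵅA with R satisfies: (α⊗α)R = R; R·Δ'(h) = Δ'ᵒᵖ(h)·R where Δ' = Δ∘α⁻¹ and products are the twisted product α∘m; and the two hexagon-type identities R⁽¹⁾₁⊗R⁽¹⁾₂⊗R⁽²⁾ = r⁽¹⁾⊗R⁽¹⁾⊗r⁽²⁾R⁽²⁾ and R⁽¹⁾⊗R⁽²⁾₁⊗R⁽²⁾₂ = r⁽¹⁾R⁽¹⁾⊗R⁽²⁾⊗r⁽²⁾ (in the twisted structure). -/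
open TensorProduct

/-! Twisting by `α` composes every structure map of `A` with a power of `α`: the twisted products
are `(α ⊗ α)` (resp. `id ⊗ id ⊗ α`, `α ⊗ id ⊗ id`) applied to the untwisted ones, and since
`(α ⊗ α) R = R`, precomposing `Δ` with `α⁻¹` on a leg of `R` is the same as applying `α` to the
other leg. Each axiom of `(A, R)` therefore turns into the corresponding Hom-axiom after applying
the appropriate power of `α`. -/

namespace HomTwist
open TensorProduct

section Twist
variable {k H : Type*} [CommRing k] [AddCommGroup H] [Module k H]

lemma mulT_tmul (mul : H →ₗ[k] H →ₗ[k] H) (a b c d : H) :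
    mulT mul (a ⊗ₜ[k] b) (c ⊗ₜ[k] d) = mul a c ⊗ₜ[k] mul b d := by
  simp [mulT, pairMap]

lemma mulT_compr₂ (mul : H →ₗ[k] H →ₗ[k] H) (φ : H →ₗ[k] H) :
    mulT (mul.compr₂ φ) = (mulT mul).compr₂ (map φ φ) := by
  ext a b c d
  simp [mulT_tmul]

lemma hexA_compr₂ (mul : H →ₗ[k] H →ₗ[k] H) (φ : H →ₗ[k] H) :
    hexA (mul.compr₂ φ) = map LinearMap.id (map LinearMap.id φ) ∘ₗ hexA mul := by
  ext
  simp [hexA]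

lemma hexB_compr₂ (mul : H →ₗ[k] H →ₗ[k] H) (φ : H →ₗ[k] H) :
    hexB (mul.compr₂ φ) = map φ LinearMap.id ∘ₗ hexB mul := by
  ext
  simp [hexB]

lemma map_apply_eq_map_comp_of_map_eq_self {M N : Type*} [AddCommGroup M] [Module k M]
    [AddCommGroup N] [Module k N] (e : H →ₗ[k] H) {R : H ⊗[k] H} (hR : map e e R = R)
    (f : H →ₗ[k] M) (g : H →ₗ[k] N) :
    map f g R = map (f ∘ₗ e) (g ∘ₗ e) R := by
  conv_lhs => rw [← hR]
  rw [← LinearMap.comp_apply, ← map_comp]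

theorem isRMatrix_compr₂ (mul : H →ₗ[k] H →ₗ[k] H) (e : H ≃ₗ[k] H)
    (comul : H →ₗ[k] H ⊗[k] H) (R : H ⊗[k] H)
    (hR : map e.toLinearMap e.toLinearMap R = R)
    (hQT₁ : ∀ x, mulT mul R (comul x) = mulT mul (TensorProduct.comm k H H (comul x)) R)
    (hQT₂ : TensorProduct.assoc k H H H (map comul LinearMap.id R) = hexA mul (R ⊗ₜ[k] R))
    (hQT₃ : map LinearMap.id comul R = hexB mul (R ⊗ₜ[k] R)) :
    IsRMatrix (mul.compr₂ e.toLinearMap) e (comul ∘ₗ e.symm.toLinearMap) R where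
  Q1 := hR
  Q2 h := by simp only [mulT_compr₂, LinearMap.compr₂_apply, LinearMap.comp_apply, hQT₁]
  Q3 := calc
    TensorProduct.assoc k H H H (map (comul ∘ₗ e.symm.toLinearMap) LinearMap.id R)
        = TensorProduct.assoc k H H H (map comul e R) := by
          rw [map_apply_eq_map_comp_of_map_eq_self _ hR]
          simp [LinearMap.comp_assoc]
      _ = map LinearMap.id (map LinearMap.id e.toLinearMap)
            (TensorProduct.assoc k H H H (map comul LinearMap.id R)) := by
          rw [map_map_assoc, map_id, ← LinearMap.comp_apply (map _ _), ← map_comp]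
          rfl
      _ = hexA (mul.compr₂ e.toLinearMap) (R ⊗ₜ[k] R) := by rw [hQT₂, hexA_compr₂]; rfl
  Q4 := calc
    map LinearMap.id (comul ∘ₗ e.symm.toLinearMap) R = map e.toLinearMap comul R := by
          rw [map_apply_eq_map_comp_of_map_eq_self _ hR]
          simp [LinearMap.comp_assoc]
      _ = map e.toLinearMap LinearMap.id (map LinearMap.id comul R) := by
          rw [← LinearMap.comp_apply (map _ _), ← map_comp]
          rfl
      _ = hexB (mul.compr₂ e.toLinearMap) (R ⊗ₜ[k] R) := by rw [hQT₃, hexB_compr₂]; rfl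

end Twist

section Algebra
variable {k A : Type*} [CommRing k] [Ring A] [Algebra k A]

lemma mulT3_leg₁₃_leg₂₃ (r s : A ⊗[k] A) :
    mulT3 (LinearMap.mul k A)
        (map LinearMap.id (TensorProduct.comm k A A).toLinearMap
          (TensorProduct.assoc k A A A (r ⊗ₜ[k] (1 : A))))
        ((1 : A) ⊗ₜ[k] s)
      = hexA (LinearMap.mul k A) (r ⊗ₜ[k] s) := by
  induction r using TensorProduct.induction_on with
  | zero => simp
  | add u v hu hv => simp only [add_tmul, map_add, LinearMap.add_apply, hu, hv]
  | tmul a b =>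
    induction s using TensorProduct.induction_on with
    | zero => simp
    | add u v hu hv => simp only [tmul_add, map_add, hu, hv]
    | tmul c d => simp [mulT3, pairMap, mulT_tmul, hexA]

lemma mulT3_leg₁₃_leg₁₂ (r s : A ⊗[k] A) :
    mulT3 (LinearMap.mul k A)
        (map LinearMap.id (TensorProduct.comm k A A).toLinearMap
          (TensorProduct.assoc k A A A (r ⊗ₜ[k] (1 : A))))
        (TensorProduct.assoc k A A A (s ⊗ₜ[k] (1 : A)))
      = hexB (LinearMap.mul k A) (r ⊗ₜ[k] s) := by
  induction r using TensorProduct.induction_on with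
  | zero => simp
  | add u v hu hv => simp only [add_tmul, map_add, LinearMap.add_apply, hu, hv]
  | tmul a b =>
    induction s using TensorProduct.induction_on with
    | zero => simp
    | add u v hu hv => simp only [tmul_add, add_tmul, map_add, hu, hv]
    | tmul c d => simp [mulT3, pairMap, mulT_tmul, hexB]

end Algebra

theorem quasitriangular_transfers_to_hom_general
    {k A : Type*} [CommRing k] [Ring A] [Bialgebra k A]
    (α : A ≃ₐ[k] A)
    (R Rinv : A ⊗[k] A)
    -- `R` is invertible:
    (hinv₁ : mulT (LinearMap.mul k A) R Rinv = (1 : A) ⊗ₜ[k] (1 : A))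
    (hinv₂ : mulT (LinearMap.mul k A) Rinv R = (1 : A) ⊗ₜ[k] (1 : A))
    -- `R Δ(x) = Δᵒᵖ(x) R`:
    (hQT₁ : ∀ x : A, mulT (LinearMap.mul k A) R (Coalgebra.comul (R := k) x)
      = mulT (LinearMap.mul k A)
          (TensorProduct.comm k A A (Coalgebra.comul (R := k) x)) R)
    -- `(Δ ⊗ id)(R) = R₁₃ R₂₃`:
    (hQT₂ : TensorProduct.assoc k A A A
        (TensorProduct.map (Coalgebra.comul (R := k)) LinearMap.id R)
      = mulT3 (LinearMap.mul k A)
          (TensorProduct.map LinearMap.id (TensorProduct.comm k A A).toLinearMap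
            (TensorProduct.assoc k A A A (R ⊗ₜ[k] (1 : A))))
          ((1 : A) ⊗ₜ[k] R))
    -- `(id ⊗ Δ)(R) = R₁₃ R₁₂`:
    (hQT₃ : TensorProduct.map LinearMap.id (Coalgebra.comul (R := k)) R
      = mulT3 (LinearMap.mul k A)
          (TensorProduct.map LinearMap.id (TensorProduct.comm k A A).toLinearMap
            (TensorProduct.assoc k A A A (R ⊗ₜ[k] (1 : A))))
          (TensorProduct.assoc k A A A (R ⊗ₜ[k] (1 : A))))
    -- `(α ⊗ α)(R) = R`:
    (hαR : TensorProduct.map α.toLinearMap α.toLinearMap R = R) :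
    IsRMatrix ((LinearMap.mul k A).compr₂ α.toLinearMap) α.toLinearEquiv
        ((Coalgebra.comul (R := k) (A := A)) ∘ₗ (α.symm : A ≃ₐ[k] A).toLinearMap) R
      ∧ mulT ((LinearMap.mul k A).compr₂ α.toLinearMap) R Rinv = (1 : A) ⊗ₜ[k] (1 : A)
      ∧ mulT ((LinearMap.mul k A).compr₂ α.toLinearMap) Rinv R = (1 : A) ⊗ₜ[k] (1 : A) := by
  refine ⟨isRMatrix_compr₂ _ α.toLinearEquiv _ R hαR hQT₁ ?_ ?_, ?_, ?_⟩
  · rw [hQT₂, mulT3_leg₁₃_leg₂₃]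
  · rw [hQT₃, mulT3_leg₁₃_leg₁₂]
  · simp [mulT_compr₂, hinv₁]
  · simp [mulT_compr₂, hinv₂]

/-- A quasitriangular bialgebra `(A, R)` with an invertible bialgebra
homomorphism `α` fixing `R` yields the quasitriangular monoidal Hom-bialgebra
`(ᵅA, α, R)`: `R` is an (invertible) `R`-matrix for the twisted structure. -/
theorem quasitriangular_transfers_to_hom
    {k A : Type*} [CommRing k] [Ring A] [Bialgebra k A]
    (α : A ≃ₐ[k] A)
    (hcomul : ∀ a : A, Coalgebra.comul (R := k) (α a)
      = TensorProduct.map α.toLinearMap α.toLinearMap (Coalgebra.comul (R := k) a))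
    (hcounit : ∀ a : A, Coalgebra.counit (R := k) (α a) = Coalgebra.counit (R := k) a)
    (R Rinv : A ⊗[k] A)
    -- `R` is invertible:
    (hinv₁ : mulT (LinearMap.mul k A) R Rinv = (1 : A) ⊗ₜ[k] (1 : A))
    (hinv₂ : mulT (LinearMap.mul k A) Rinv R = (1 : A) ⊗ₜ[k] (1 : A))
    -- `R Δ(x) = Δᵒᵖ(x) R`:
    (hQT₁ : ∀ x : A, mulT (LinearMap.mul k A) R (Coalgebra.comul (R := k) x)
      = mulT (LinearMap.mul k A)
          (TensorProduct.comm k A A (Coalgebra.comul (R := k) x)) R)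
    -- `(Δ ⊗ id)(R) = R₁₃ R₂₃`:
    (hQT₂ : TensorProduct.assoc k A A A
        (TensorProduct.map (Coalgebra.comul (R := k)) LinearMap.id R)
      = mulT3 (LinearMap.mul k A)
          (TensorProduct.map LinearMap.id (TensorProduct.comm k A A).toLinearMap
            (TensorProduct.assoc k A A A (R ⊗ₜ[k] (1 : A))))
          ((1 : A) ⊗ₜ[k] R))
    -- `(id ⊗ Δ)(R) = R₁₃ R₁₂`:
    (hQT₃ : TensorProduct.map LinearMap.id (Coalgebra.comul (R := k)) R
      = mulT3 (LinearMap.mul k A)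
          (TensorProduct.map LinearMap.id (TensorProduct.comm k A A).toLinearMap
            (TensorProduct.assoc k A A A (R ⊗ₜ[k] (1 : A))))
          (TensorProduct.assoc k A A A (R ⊗ₜ[k] (1 : A))))
    -- `(α ⊗ α)(R) = R`:
    (hαR : TensorProduct.map α.toLinearMap α.toLinearMap R = R) :
    IsRMatrix ((LinearMap.mul k A).compr₂ α.toLinearMap) α.toLinearEquiv
        ((Coalgebra.comul (R := k) (A := A)) ∘ₗ (α.symm : A ≃ₐ[k] A).toLinearMap) R
      ∧ mulT ((LinearMap.mul k A).compr₂ α.toLinearMap) R Rinv = (1 : A) ⊗ₜ[k] (1 : A)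
      ∧ mulT ((LinearMap.mul k A).compr₂ α.toLinearMap) Rinv R = (1 : A) ⊗ₜ[k] (1 : A) :=
  quasitriangular_transfers_to_hom_general α R Rinv hinv₁ hinv₂ hQT₁ hQT₂ hQT₃ hαR

end HomTwist
end

section
/- Let (H, α, R) be a quasitriangular monoidal Hom-bialgebra. Then R satisfies the quantum Hom-Yang-Baxter equations (R₁₂R₁₃)R₂₃ = R₂₃(R₁₃R₁₂) and R₁₂(R₁₃R₂₃) = (R₂₃R₁₃)R₁₂ in H⊗H⊗H, where R₁₂ = R⊗1_H, R₂₃ = 1_H⊗R, R₁₃ = (τ⊗id)(R₂₃), and multiplication in H⊗H⊗H is componentwise with the Hom-associative product of H. -/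
open TensorProduct

namespace HomTwist
open TensorProduct

/-! The four pairwise products of legs of `R` that occur contain the unit in one tensor factor,
so by `1a = a1 = α(a)` they are `α`-twists of `(id ⊗ Δ)(R)` (products of `R₁₂` and `R₁₃`, by (Q4))
or of `(Δ ⊗ id)(R)` (products of `R₁₃` and `R₂₃`, by (Q3)); the two orders differ only by the flip
`τ` in the coproduct factor. Multiplying by the remaining leg multiplies that factor by `R`, on the
left or on the right, and `R Δ(α h) = Δᵒᵖ(α h) R` absorbs the flip, so both sides coincide. -/

section Legs
variable {k H : Type*} [CommRing k] [AddCommGroup H] [Module k H]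

@[simp]
lemma pairMap_tmul_tmul {H₁ H₂ A B : Type*} [AddCommGroup H₁] [Module k H₁]
    [AddCommGroup H₂] [Module k H₂] [AddCommGroup A] [Module k A] [AddCommGroup B] [Module k B]
    (f : H₁ →ₗ[k] A →ₗ[k] A) (g : H₂ →ₗ[k] B →ₗ[k] B) (h₁ : H₁) (h₂ : H₂) (a : A) (b : B) :
    pairMap f g (h₁ ⊗ₜ h₂) (a ⊗ₜ b) = f h₁ a ⊗ₜ g h₂ b := by
  simp [pairMap]

variable (mul : H →ₗ[k] H →ₗ[k] H) {one : H} {alpha : H ≃ₗ[k] H}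

@[simp]
lemma hexA_tmul (x y z w : H) : hexA mul ((x ⊗ₜ[k] y) ⊗ₜ (z ⊗ₜ w)) = x ⊗ₜ (z ⊗ₜ mul y w) := by
  simp [hexA]

@[simp]
lemma hexB_tmul (x y z w : H) : hexB mul ((x ⊗ₜ[k] y) ⊗ₜ (z ⊗ₜ w)) = mul x z ⊗ₜ (w ⊗ₜ y) := by
  simp [hexB]

local notation "τ" => LinearEquiv.toLinearMap (TensorProduct.comm k H H)
local notation "α₂" => map alpha.toLinearMap alpha.toLinearMap
local notation "leg₁₂ " X:max => TensorProduct.assoc k H H H (X ⊗ₜ[k] one)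
local notation "leg₁₃ " X:max => map LinearMap.id τ (leg₁₂ X)

lemma mulT3_one_tmul (h_one_mul : ∀ a, mul one a = alpha a) (S : H ⊗[k] H)
    (W : H ⊗[k] (H ⊗[k] H)) :
    mulT3 mul (one ⊗ₜ S) W = map alpha.toLinearMap (mulT mul S) W := by
  induction W using TensorProduct.induction_on with
  | zero => simp
  | add u v hu hv => simp only [map_add, hu, hv]
  | tmul a b => simp [mulT3, h_one_mul]

lemma mulT3_tmul_one (h_mul_one : ∀ a, mul a one = alpha a) (S : H ⊗[k] H)
    (W : H ⊗[k] (H ⊗[k] H)) :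
    mulT3 mul W (one ⊗ₜ S) = map alpha.toLinearMap ((mulT mul).flip S) W := by
  induction W using TensorProduct.induction_on with
  | zero => simp
  | add u v hu hv => simp only [map_add, LinearMap.add_apply, hu, hv]
  | tmul a b => simp [mulT3, h_mul_one]

lemma mulT3_leg₁₂_leg₁₃ (h_one_mul : ∀ a, mul one a = alpha a)
    (h_mul_one : ∀ a, mul a one = alpha a) (X Y : H ⊗[k] H) :
    mulT3 mul (leg₁₂ X) (leg₁₃ Y) = map LinearMap.id (τ ∘ₗ α₂) (hexB mul (X ⊗ₜ Y)) := by
  induction X using TensorProduct.induction_on with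
  | zero => simp
  | add u v hu hv => simp only [add_tmul, map_add, LinearMap.add_apply, hu, hv]
  | tmul x y =>
    induction Y using TensorProduct.induction_on with
    | zero => simp
    | add u v hu hv => simp only [add_tmul, tmul_add, map_add, hu, hv]
    | tmul z w => simp [mulT3, mulT, h_one_mul, h_mul_one]

lemma mulT3_leg₁₃_leg₁₂_s5 (h_one_mul : ∀ a, mul one a = alpha a)
    (h_mul_one : ∀ a, mul a one = alpha a) (X Y : H ⊗[k] H) :
    mulT3 mul (leg₁₃ X) (leg₁₂ Y) = map LinearMap.id α₂ (hexB mul (X ⊗ₜ Y)) := by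
  induction X using TensorProduct.induction_on with
  | zero => simp
  | add u v hu hv => simp only [add_tmul, map_add, LinearMap.add_apply, hu, hv]
  | tmul x y =>
    induction Y using TensorProduct.induction_on with
    | zero => simp
    | add u v hu hv => simp only [add_tmul, tmul_add, map_add, hu, hv]
    | tmul z w => simp [mulT3, mulT, h_one_mul, h_mul_one]

lemma mulT3_leg₁₃_leg₂₃_s5 (h_one_mul : ∀ a, mul one a = alpha a)
    (h_mul_one : ∀ a, mul a one = alpha a) (X Y : H ⊗[k] H) :
    mulT3 mul (leg₁₃ X) (one ⊗ₜ Y) = TensorProduct.assoc k H H H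
      (map α₂ LinearMap.id ((TensorProduct.assoc k H H H).symm (hexA mul (X ⊗ₜ Y)))) := by
  induction X using TensorProduct.induction_on with
  | zero => simp
  | add u v hu hv => simp only [add_tmul, map_add, LinearMap.add_apply, hu, hv]
  | tmul x y =>
    induction Y using TensorProduct.induction_on with
    | zero => simp
    | add u v hu hv => simp only [tmul_add, map_add, hu, hv]
    | tmul z w => simp [mulT3, mulT, h_one_mul, h_mul_one]

lemma mulT3_leg₂₃_leg₁₃ (h_one_mul : ∀ a, mul one a = alpha a)
    (h_mul_one : ∀ a, mul a one = alpha a) (X Y : H ⊗[k] H) :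
    mulT3 mul (one ⊗ₜ X) (leg₁₃ Y) = TensorProduct.assoc k H H H
      (map (τ ∘ₗ α₂) LinearMap.id ((TensorProduct.assoc k H H H).symm (hexA mul (X ⊗ₜ Y)))) := by
  induction X using TensorProduct.induction_on with
  | zero => simp
  | add u v hu hv => simp only [add_tmul, tmul_add, map_add, LinearMap.add_apply, hu, hv]
  | tmul x y =>
    induction Y using TensorProduct.induction_on with
    | zero => simp
    | add u v hu hv => simp only [add_tmul, tmul_add, map_add, hu, hv]
    | tmul z w => simp [mulT3, mulT, h_one_mul, h_mul_one]

lemma mulT3_leg₁₂_assoc (h_one_mul : ∀ a, mul one a = alpha a) (X : H ⊗[k] H)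
    (W : (H ⊗[k] H) ⊗[k] H) :
    mulT3 mul (leg₁₂ X) (TensorProduct.assoc k H H H W)
      = TensorProduct.assoc k H H H (map (mulT mul X) alpha.toLinearMap W) := by
  induction X using TensorProduct.induction_on with
  | zero => simp
  | add u v hu hv =>
    simp only [add_tmul, map_add, TensorProduct.map_add_left, LinearMap.add_apply, hu, hv]
  | tmul x y =>
    induction W using TensorProduct.induction_on with
    | zero => simp
    | add u v hu hv => simp only [map_add, hu, hv]
    | tmul p c =>
      induction p using TensorProduct.induction_on with
      | zero => simp
      | add u v hu hv => simp only [add_tmul, map_add, hu, hv]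
      | tmul a b => simp [mulT3, mulT, h_one_mul]

lemma mulT3_assoc_leg₁₂ (h_mul_one : ∀ a, mul a one = alpha a) (X : H ⊗[k] H)
    (W : (H ⊗[k] H) ⊗[k] H) :
    mulT3 mul (TensorProduct.assoc k H H H W) (leg₁₂ X)
      = TensorProduct.assoc k H H H (map ((mulT mul).flip X) alpha.toLinearMap W) := by
  induction X using TensorProduct.induction_on with
  | zero => simp
  | add u v hu hv =>
    simp only [add_tmul, map_add, TensorProduct.map_add_left, LinearMap.add_apply, hu, hv]
  | tmul x y =>
    induction W using TensorProduct.induction_on with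
    | zero => simp
    | add u v hu hv => simp only [map_add, LinearMap.add_apply, hu, hv]
    | tmul p c =>
      induction p using TensorProduct.induction_on with
      | zero => simp
      | add u v hu hv => simp only [add_tmul, map_add, LinearMap.add_apply, hu, hv]
      | tmul a b => simp [mulT3, mulT, h_mul_one]

lemma IsRMatrix.flip_mulT_comp_comm_comp_comul {comul : H →ₗ[k] H ⊗[k] H} {R : H ⊗[k] H}
    (hR : IsRMatrix mul alpha comul R) (h_comul_alpha : ∀ c, comul (alpha c) = α₂ (comul c)) :
    (mulT mul).flip R ∘ₗ τ ∘ₗ α₂ ∘ₗ comul = mulT mul R ∘ₗ α₂ ∘ₗ comul := by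
  ext c
  simpa [← h_comul_alpha] using (hR.Q2 (alpha c)).symm

end Legs

theorem quantum_hom_yang_baxter_general
    {k H : Type*} [CommRing k] [AddCommGroup H] [Module k H]
    (mul : H →ₗ[k] H →ₗ[k] H) (one : H) (alpha : H ≃ₗ[k] H)
    (comul : H →ₗ[k] H ⊗[k] H) (counit : H →ₗ[k] k) (R : H ⊗[k] H)
    (hH : IsMonHomBialgebra mul one alpha comul counit)
    (hR : IsRMatrix mul alpha comul R) :
    (mulT3 mul
        (mulT3 mul (TensorProduct.assoc k H H H (R ⊗ₜ[k] one))
          (TensorProduct.map LinearMap.id (TensorProduct.comm k H H).toLinearMap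
            (TensorProduct.assoc k H H H (R ⊗ₜ[k] one))))
        (one ⊗ₜ[k] R)
      = mulT3 mul (one ⊗ₜ[k] R)
          (mulT3 mul
            (TensorProduct.map LinearMap.id (TensorProduct.comm k H H).toLinearMap
              (TensorProduct.assoc k H H H (R ⊗ₜ[k] one)))
            (TensorProduct.assoc k H H H (R ⊗ₜ[k] one))))
    ∧ (mulT3 mul (TensorProduct.assoc k H H H (R ⊗ₜ[k] one))
        (mulT3 mul
          (TensorProduct.map LinearMap.id (TensorProduct.comm k H H).toLinearMap
            (TensorProduct.assoc k H H H (R ⊗ₜ[k] one)))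
          (one ⊗ₜ[k] R))
      = mulT3 mul
          (mulT3 mul (one ⊗ₜ[k] R)
            (TensorProduct.map LinearMap.id (TensorProduct.comm k H H).toLinearMap
              (TensorProduct.assoc k H H H (R ⊗ₜ[k] one))))
          (TensorProduct.assoc k H H H (R ⊗ₜ[k] one))) := by
  have key := hR.flip_mulT_comp_comm_comp_comul mul hH.comul_alpha
  constructor
  · rw [mulT3_leg₁₂_leg₁₃ mul hH.one_mul' hH.mul_one', ← hR.Q4, mulT3_tmul_one mul hH.mul_one',
      mulT3_leg₁₃_leg₁₂_s5 mul hH.one_mul' hH.mul_one', ← hR.Q4, mulT3_one_tmul mul hH.one_mul']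
    simp only [map_map, LinearMap.comp_id, LinearMap.comp_assoc, key]
  · rw [mulT3_leg₁₃_leg₂₃_s5 mul hH.one_mul' hH.mul_one', ← hR.Q3, LinearEquiv.symm_apply_apply,
      mulT3_leg₁₂_assoc mul hH.one_mul', mulT3_leg₂₃_leg₁₃ mul hH.one_mul' hH.mul_one', ← hR.Q3,
      LinearEquiv.symm_apply_apply, mulT3_assoc_leg₁₂ mul hH.mul_one']
    simp only [map_map, LinearMap.comp_id, LinearMap.comp_assoc, key]

/-- An `R`-matrix of a quasitriangular monoidal Hom-bialgebra
satisfies the quantum Hom-Yang-Baxter equations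
`(R₁₂R₁₃)R₂₃ = R₂₃(R₁₃R₁₂)` and `R₁₂(R₁₃R₂₃) = (R₂₃R₁₃)R₁₂`. -/
theorem quantum_hom_yang_baxter
    {k H : Type*} [CommRing k] [AddCommGroup H] [Module k H]
    (mul : H →ₗ[k] H →ₗ[k] H) (one : H) (alpha : H ≃ₗ[k] H)
    (comul : H →ₗ[k] H ⊗[k] H) (counit : H →ₗ[k] k) (R Rinv : H ⊗[k] H)
    (hH : IsMonHomBialgebra mul one alpha comul counit)
    (hinv₁ : mulT mul R Rinv = one ⊗ₜ[k] one)
    (hinv₂ : mulT mul Rinv R = one ⊗ₜ[k] one)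
    (hR : IsRMatrix mul alpha comul R) :
    (mulT3 mul
        (mulT3 mul (TensorProduct.assoc k H H H (R ⊗ₜ[k] one))
          (TensorProduct.map LinearMap.id (TensorProduct.comm k H H).toLinearMap
            (TensorProduct.assoc k H H H (R ⊗ₜ[k] one))))
        (one ⊗ₜ[k] R)
      = mulT3 mul (one ⊗ₜ[k] R)
          (mulT3 mul
            (TensorProduct.map LinearMap.id (TensorProduct.comm k H H).toLinearMap
              (TensorProduct.assoc k H H H (R ⊗ₜ[k] one)))
            (TensorProduct.assoc k H H H (R ⊗ₜ[k] one))))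
    ∧ (mulT3 mul (TensorProduct.assoc k H H H (R ⊗ₜ[k] one))
        (mulT3 mul
          (TensorProduct.map LinearMap.id (TensorProduct.comm k H H).toLinearMap
            (TensorProduct.assoc k H H H (R ⊗ₜ[k] one)))
          (one ⊗ₜ[k] R))
      = mulT3 mul
          (mulT3 mul (one ⊗ₜ[k] R)
            (TensorProduct.map LinearMap.id (TensorProduct.comm k H H).toLinearMap
              (TensorProduct.assoc k H H H (R ⊗ₜ[k] one))))
          (TensorProduct.assoc k H H H (R ⊗ₜ[k] one))) :=
  quantum_hom_yang_baxter_general mul one alpha comul counit R hH hR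

end HomTwist
end
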